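/- Privacy of the small-domain frequency-estimation protocol: let n, B be positive integers, 0 < ε ≤ 3, 0 < δ < 1, and set ρ = (32·ln(2/δ)/ε²)·(B/n). Assume ρ ≤ 1. For an input dataset D = (x₁,…,x_n) ∈ [B]^n, let M(D) be the random multiset over [B] obtained by taking the multiset {x₁,…,x_n} and, independently for each user i ∈ [n], with probability ρ adding one additional element chosen uniformly from [B]. Then for any two datasets D, D' ∈ [B]^n differing in exactly one coordinate and any set Y of multisets over [B], Pr[M(D) ∈ Y] ≤ e^ε · Pr[M(D') ∈ Y] + δ. -/

import Mathlib

open scoped ENNReal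

noncomputable def uniformBin (m : ℕ) (hm : 0 < m) : PMF (Fin m) :=
  PMF.uniformOfFinset Finset.univ
    (Finset.univ_nonempty_iff.mpr (Fin.pos_iff_nonempty.mp hm))

/-- Sum of `n` independent copies of a random multiset. -/
noncomputable def repeatMS {α : Type*} (ν : PMF (Multiset α)) : ℕ → PMF (Multiset α)
  | 0 => PMF.pure 0
  | n + 1 => ν.bind fun s => (repeatMS ν n).map (s + ·)

/-- The old `PMF.bernoulli` (with an `ℝ≥0∞` parameter), which assigns probability `p`
to `true` and `1 - p` to `false`. -/
noncomputable def bernoulliPMF (p : ℝ≥0∞) (h : p ≤ 1) : PMF Bool :=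
  PMF.ofFintype (fun b => cond b p (1 - p)) (by simp [h])

/-- With probability `p`, one draw from `ν`; otherwise nothing. -/
noncomputable def trialM {α : Type*} (ν : PMF α) (p : ℝ≥0∞) (hp : p ≤ 1) : PMF (Multiset α) :=
  (bernoulliPMF p hp).bind fun b => if b then ν.map (fun x => {x}) else PMF.pure 0

/-- The small-domain frequency-estimation mechanism: the multiset of the `n` true
inputs, plus, independently for each user, one uniform blanket-noise element with
probability `ρ`. -/
noncomputable def MFE0 (B n : ℕ) (hB : 0 < B) (ρ : ℝ≥0∞) (hρ : ρ ≤ 1)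
    (D : Fin n → Fin B) : PMF (Multiset (Fin B)) :=
  (repeatMS (trialM (uniformBin B hB) ρ hρ) n).map fun N =>
    Multiset.map D Finset.univ.val + N

/-!
Neighbouring datasets produce `C + (a ::ₘ N)` and `C + (b ::ₘ N)` with the same noise multiset
`N`, so it suffices to compare the laws of `a ::ₘ N` and `b ::ₘ N`. Given its size, `N` is a
multinomial sample, so `P(N = M) · ∏ₓ (count x M)!` depends only on `card M`; hence the likelihood
ratio of `a ::ₘ N` to `b ::ₘ N` at `M` is `count a M / count b M`. This ratio exceeds `e^ε` only if
`count a N` is unusually large or `count b N` unusually small. Both counts are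
`Binomial(n, ρ / B)` with mean `32 log(2/δ) / ε²`, and a Chernoff bound at `τ = e^{±ε/2}` gives
each of these events probability at most `δ / 2`.
-/

open MeasureTheory Real
open scoped Nat

namespace PMF

variable {α β : Type*}

lemma tsum_bind_mul (p : PMF α) (f : α → PMF β) (g : β → ℝ≥0∞) :
    ∑' b, p.bind f b * g b = ∑' a, p a * ∑' b, f a b * g b := by
  simp_rw [bind_apply, ← ENNReal.tsum_mul_right, ← ENNReal.tsum_mul_left, mul_assoc]
  exact ENNReal.tsum_comm

lemma tsum_map_mul (p : PMF α) (f : α → β) (g : β → ℝ≥0∞) :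
    ∑' b, p.map f b * g b = ∑' a, p a * g (f a) := by
  rw [map, tsum_bind_mul]
  congr! 2 with a
  rw [tsum_eq_single (f a) fun b hb => by simp [hb]]
  simp

lemma mul_toOuterMeasure_le_tsum_mul (p : PMF α) {s : Set α} {c : ℝ≥0∞} {g : α → ℝ≥0∞}
    (h : ∀ a ∈ s, c ≤ g a) : c * p.toOuterMeasure s ≤ ∑' a, p a * g a := by
  rw [toOuterMeasure_apply, ← ENNReal.tsum_mul_left]
  refine ENNReal.tsum_le_tsum fun a => ?_
  by_cases ha : a ∈ s
  · simpa [Set.indicator_of_mem ha, mul_comm] using mul_le_mul_right (h a ha) (p a)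
  · simp [Set.indicator_of_notMem ha]

lemma toOuterMeasure_le_mul_add_of_le_on (p q : PMF α) {G : Set α} {c : ℝ≥0∞}
    (h : ∀ a ∈ G, p a ≤ c * q a) (Y : Set α) :
    p.toOuterMeasure Y ≤ c * q.toOuterMeasure Y + p.toOuterMeasure Gᶜ := by
  calc p.toOuterMeasure Y ≤ p.toOuterMeasure (Y ∩ G) + p.toOuterMeasure Gᶜ := by
        refine (measure_mono fun a ha => ?_).trans (measure_union_le _ _)
        by_cases hG : a ∈ G
        exacts [Or.inl ⟨ha, hG⟩, Or.inr hG]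
    _ ≤ c * q.toOuterMeasure Y + p.toOuterMeasure Gᶜ := by
        gcongr
        simp only [toOuterMeasure_apply, ← ENNReal.tsum_mul_left]
        refine ENNReal.tsum_le_tsum fun a => ?_
        by_cases ha : a ∈ Y ∩ G
        · simpa [Set.indicator_of_mem ha, Set.indicator_of_mem ha.1] using h a ha.2
        · simp [Set.indicator_of_notMem ha]

lemma toOuterMeasure_ne_top (p : PMF α) (s : Set α) : p.toOuterMeasure s ≠ ⊤ :=
  ne_top_of_le_ne_top ENNReal.one_ne_top <| (measure_mono (Set.subset_univ s)).trans_eq <|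
    (p.toOuterMeasure_apply_eq_one_iff _).2 fun _ _ => trivial

lemma map_cons_apply [DecidableEq α] (p : PMF (Multiset α)) (a : α) (M : Multiset α) :
    p.map (a ::ₘ ·) M = if a ∈ M then p (M.erase a) else 0 := by
  rw [map_apply]
  split_ifs with h
  · rw [tsum_eq_single (M.erase a), if_pos (Multiset.cons_erase h).symm]
    rintro N hN
    rw [if_neg]
    rintro rfl
    simp at hN
  · exact ENNReal.tsum_eq_zero.2 fun N =>
      if_neg fun hM : M = a ::ₘ N => h (hM ▸ Multiset.mem_cons_self a N)

end PMF

lemma ENNReal.toReal_le_mul_add_of_le {x y : ℝ≥0∞} {c d : ℝ} (hc : 0 ≤ c) (hd : 0 ≤ d)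
    (hy : y ≠ ⊤) (h : x ≤ ENNReal.ofReal c * y + ENNReal.ofReal d) :
    x.toReal ≤ c * y.toReal + d := by
  refine (ENNReal.toReal_mono (by finiteness) h).trans_eq ?_
  rw [ENNReal.toReal_add (by finiteness) ENNReal.ofReal_ne_top, ENNReal.toReal_mul,
    ENNReal.toReal_ofReal hc, ENNReal.toReal_ofReal hd]

section

variable {α : Type*}

lemma trialM_bind_map_add_apply (ν : PMF α) (r : ℝ≥0∞) (hr : r ≤ 1) (q : PMF (Multiset α))
    (M : Multiset α) :
    (trialM ν r hr).bind (fun s => q.map (s + ·)) M =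
      (1 - r) * q M + r * ∑' z, ν z * q.map (z ::ₘ ·) M := by
  rw [trialM, PMF.bind_bind, PMF.bind_apply, tsum_bool]
  simp only [bernoulliPMF, PMF.ofFintype_apply, cond_false, cond_true, Bool.false_eq_true,
    if_false, if_true, PMF.pure_bind, zero_add, PMF.bind_map, PMF.bind_apply, Function.comp_def,
    Multiset.singleton_add]
  exact congrArg (fun p : PMF _ => (1 - r) * p M + _) q.map_id

variable [Fintype α] [DecidableEq α]

def countFactorial (M : Multiset α) : ℕ := ∏ a, (M.count a)!

lemma countFactorial_cons (a : α) (M : Multiset α) :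
    countFactorial (a ::ₘ M) = (M.count a + 1) * countFactorial M := by
  simp only [countFactorial, ← Finset.mul_prod_erase _ _ (Finset.mem_univ a),
    Multiset.count_cons_self, Nat.factorial_succ, mul_assoc]
  congr 2
  refine Finset.prod_congr rfl fun b hb => ?_
  rw [Multiset.count_cons_of_ne (Finset.ne_of_mem_erase hb)]

lemma countFactorial_ne_zero (M : Multiset α) : countFactorial M ≠ 0 :=
  Finset.prod_ne_zero_iff.2 fun _ _ => Nat.factorial_ne_zero _

lemma countFactorial_mul_map_cons_apply {q : PMF (Multiset α)} {g : ℕ → ℝ≥0∞}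
    (hq : ∀ M, (countFactorial M : ℝ≥0∞) * q M = g (Multiset.card M)) (a : α) (M : Multiset α) :
    (countFactorial M : ℝ≥0∞) * q.map (a ::ₘ ·) M = M.count a * g (Multiset.card M - 1) := by
  rw [PMF.map_cons_apply]
  split_ifs with ha
  · obtain ⟨N, rfl⟩ : ∃ N, M = a ::ₘ N := ⟨M.erase a, (Multiset.cons_erase ha).symm⟩
    rw [countFactorial_cons, Nat.cast_mul, mul_assoc, Multiset.erase_cons_head, hq,
      Multiset.count_cons_self, Multiset.card_cons, Nat.add_sub_cancel]
  · simp [Multiset.count_eq_zero.2 ha]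

end

noncomputable def blanketNoise (α : Type*) [Fintype α] [Nonempty α] (r : ℝ≥0∞) (hr : r ≤ 1) :
    ℕ → PMF (Multiset α) :=
  repeatMS (trialM (PMF.uniformOfFintype α) r hr)

section

variable {α : Type*} [Fintype α] [Nonempty α] {r : ℝ≥0∞} (hr : r ≤ 1)

lemma blanketNoise_succ_apply (n : ℕ) (M : Multiset α) :
    blanketNoise α r hr (n + 1) M = (1 - r) * blanketNoise α r hr n M +
      r * (Fintype.card α : ℝ≥0∞)⁻¹ * ∑ z, (blanketNoise α r hr n).map (z ::ₘ ·) M := by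
  rw [blanketNoise, repeatMS, trialM_bind_map_add_apply, tsum_fintype]
  simp only [PMF.uniformOfFintype_apply, ← Finset.mul_sum, mul_assoc]

variable [DecidableEq α]

lemma exists_countFactorial_mul_blanketNoise_eq (n : ℕ) :
    ∃ g : ℕ → ℝ≥0∞, ∀ M : Multiset α,
      (countFactorial M : ℝ≥0∞) * blanketNoise α r hr n M = g (Multiset.card M) := by
  induction n with
  | zero =>
    refine ⟨fun k => if k = 0 then 1 else 0, fun M => ?_⟩
    rcases eq_or_ne M 0 with rfl | hM
    · simp [blanketNoise, repeatMS, countFactorial]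
    · simp [blanketNoise, repeatMS, hM]
  | succ n ih =>
    obtain ⟨g, hg⟩ := ih
    refine ⟨fun k => (1 - r) * g k + r * (Fintype.card α : ℝ≥0∞)⁻¹ * (k * g (k - 1)),
      fun M => ?_⟩
    have hsum : ∑ z, (M.count z : ℝ≥0∞) = Multiset.card M := by
      exact_mod_cast Multiset.sum_count_eq_card fun a _ => Finset.mem_univ a
    simp only [blanketNoise_succ_apply, mul_add, Finset.mul_sum, mul_left_comm _ (1 - r),
      mul_left_comm _ (r * _), hg, countFactorial_mul_map_cons_apply hg]
    rw [← Finset.mul_sum, ← Finset.sum_mul, hsum]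

lemma count_mul_blanketNoise_map_cons_comm (n : ℕ) (a b : α) (M : Multiset α) :
    M.count b * (blanketNoise α r hr n).map (a ::ₘ ·) M =
      M.count a * (blanketNoise α r hr n).map (b ::ₘ ·) M := by
  obtain ⟨g, hg⟩ := exists_countFactorial_mul_blanketNoise_eq (α := α) hr n
  refine (ENNReal.mul_right_inj (a := (countFactorial M : ℝ≥0∞))
    (by simp [countFactorial_ne_zero]) (ENNReal.natCast_ne_top _)).1 ?_
  rw [mul_left_comm, countFactorial_mul_map_cons_apply hg,
    mul_left_comm (countFactorial M : ℝ≥0∞), countFactorial_mul_map_cons_apply hg, mul_left_comm]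

lemma blanketNoise_map_cons_le {n : ℕ} {a b : α} {M : Multiset α} {c : ℝ≥0∞}
    (hM : (M.count a : ℝ≥0∞) ≤ c * M.count b) :
    (blanketNoise α r hr n).map (a ::ₘ ·) M ≤ c * (blanketNoise α r hr n).map (b ::ₘ ·) M := by
  rcases eq_or_ne (M.count b) 0 with hb | hb
  · have ha : a ∉ M := Multiset.count_eq_zero.1 (by simpa [hb] using hM)
    rw [PMF.map_cons_apply, if_neg ha]
    exact zero_le
  refine (ENNReal.mul_le_mul_iff_right (a := (M.count b : ℝ≥0∞)) (by exact_mod_cast hb)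
    (ENNReal.natCast_ne_top _)).1 ?_
  rw [count_mul_blanketNoise_map_cons_comm, mul_left_comm, ← mul_assoc]
  exact mul_le_mul_left hM _

end

lemma tsum_repeatMS_mul_pow_count {α : Type*} [DecidableEq α] (ν : PMF (Multiset α)) (z : α)
    (t : ℝ≥0∞) (n : ℕ) :
    ∑' N, repeatMS ν n N * t ^ N.count z = (∑' s, ν s * t ^ s.count z) ^ n := by
  induction n with
  | zero => simp [repeatMS, PMF.pure_apply]
  | succ n ih =>
    rw [repeatMS, PMF.tsum_bind_mul, pow_succ', ← ih, ← ENNReal.tsum_mul_right]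
    refine tsum_congr fun s => ?_
    rw [PMF.tsum_map_mul, mul_assoc, ← ENNReal.tsum_mul_left (a := t ^ s.count z)]
    congr 1
    refine tsum_congr fun N => ?_
    rw [Multiset.count_add, pow_add]
    ring

section

variable {α : Type*} [Fintype α] [DecidableEq α] [Nonempty α]

lemma tsum_trialM_uniformOfFintype_mul_pow_count {r : ℝ≥0∞} (hr : r ≤ 1) (z : α) (t : ℝ≥0∞) :
    ∑' s, trialM (PMF.uniformOfFintype α) r hr s * t ^ s.count z =
      (1 - r) + r * (Fintype.card α : ℝ≥0∞)⁻¹ * ((Fintype.card α - 1 : ℕ) + t) := by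
  have hnone : ∑' s, PMF.pure (0 : Multiset α) s * t ^ s.count z = 1 := by
    simp [PMF.pure_apply]
  have hone : ∑' s, (PMF.uniformOfFintype α).map (fun x : α => ({x} : Multiset α)) s *
      t ^ s.count z = (Fintype.card α : ℝ≥0∞)⁻¹ * ((Fintype.card α - 1 : ℕ) + t) := by
    rw [PMF.tsum_map_mul, tsum_fintype, Fintype.sum_eq_add_sum_compl z,
      Finset.sum_congr rfl (g := fun _ => (Fintype.card α : ℝ≥0∞)⁻¹) fun x hx => ?_]
    · simp [Finset.card_compl, PMF.uniformOfFintype_apply]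
      ring
    · rw [Finset.mem_compl, Finset.mem_singleton] at hx
      simp [PMF.uniformOfFintype_apply, Ne.symm hx]
  rw [trialM, PMF.tsum_bind_mul, tsum_bool]
  simp only [bernoulliPMF, PMF.ofFintype_apply, cond_false, cond_true, Bool.false_eq_true,
    if_false, if_true, hnone, hone]
  ring

lemma tsum_blanketNoise_mul_pow_count_le {ρ : ℝ} (hρ : 0 ≤ ρ) (hr : ENNReal.ofReal ρ ≤ 1)
    {τ : ℝ} (hτ : 0 ≤ τ) (z : α) (n : ℕ) :
    ∑' N, blanketNoise α (ENNReal.ofReal ρ) hr n N * ENNReal.ofReal τ ^ N.count z ≤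
      ENNReal.ofReal (exp (n * (ρ / Fintype.card α) * (τ - 1))) := by
  have hρ1 : ρ ≤ 1 := ENNReal.ofReal_le_one.1 hr
  have hB : (1 : ℝ) ≤ Fintype.card α := by exact_mod_cast Fintype.card_pos
  have hp0 : 0 ≤ ρ / Fintype.card α := by positivity
  have hp1 : ρ / Fintype.card α ≤ 1 := (div_le_one (by linarith)).2 (by linarith)
  have hbase : (1 - ENNReal.ofReal ρ) + ENNReal.ofReal ρ * (Fintype.card α : ℝ≥0∞)⁻¹ *
      ((Fintype.card α - 1 : ℕ) + ENNReal.ofReal τ) =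
        ENNReal.ofReal (1 + ρ / Fintype.card α * (τ - 1)) := by
    rw [← ENNReal.ofReal_one, ← ENNReal.ofReal_sub _ hρ, ← ENNReal.ofReal_natCast,
      ← ENNReal.ofReal_natCast, ← ENNReal.ofReal_inv_of_pos (by linarith),
      ← ENNReal.ofReal_add (by positivity) hτ, ← ENNReal.ofReal_mul hρ,
      ← ENNReal.ofReal_mul (by positivity), ← ENNReal.ofReal_add (by linarith) (by positivity),
      Nat.cast_sub (by exact_mod_cast hB)]
    congr 1
    field_simp
    ring
  have hbase0 : 0 ≤ 1 + ρ / Fintype.card α * (τ - 1) := by nlinarith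
  rw [blanketNoise, tsum_repeatMS_mul_pow_count, tsum_trialM_uniformOfFintype_mul_pow_count,
    hbase, ← ENNReal.ofReal_pow hbase0, mul_assoc, exp_nat_mul]
  exact ENNReal.ofReal_le_ofReal (pow_le_pow_left₀ hbase0
    (by linarith [add_one_le_exp (ρ / Fintype.card α * (τ - 1))]) n)

end

lemma sq_mul_one_add_exp_add_le_sq_exp_half_sub_one (ε : ℝ) (hε0 : 0 < ε) (hε3 : ε ≤ 3) :
    ε ^ 2 * (1 + exp ε) + 3 / 4 * ε ^ 3 ≤ 32 * (exp (ε / 2) - 1) ^ 2 := by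
  obtain ⟨s, rfl⟩ : ∃ s, ε = 2 * s := ⟨ε / 2, by ring⟩
  have hs0 : 0 < s := by linarith
  have hs1 : s ≤ 3 / 2 := by linarith
  set p := 1 + s + s ^ 2 / 2 + s ^ 3 / 6 with hp
  have hy : p ≤ exp s := by
    simpa [Finset.sum_range_succ, Nat.factorial] using sum_le_exp_of_nonneg hs0.le 4
  -- `16 (y - 1)² - 2 s² (1 + y²)` increases from `y = p` to `y = exp s`, so checking the
  -- inequality at the Taylor polynomial `p` suffices.
  have hslope : 32 ≤ (16 - 2 * s ^ 2) * (exp s + p) := by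
    have h2 : 2 + 2 * s ≤ exp s + p := by nlinarith [add_one_le_exp s]
    nlinarith [mul_le_mul_of_nonneg_left h2 (show 0 ≤ 16 - 2 * s ^ 2 by nlinarith),
      mul_nonneg hs0.le (show 0 ≤ 8 - s - s ^ 2 by nlinarith)]
  have hpoly : 3 * s ^ 3 ≤ 16 * (p - 1) ^ 2 - 2 * s ^ 2 * (1 + p ^ 2) := by
    rw [hp]
    nlinarith [pow_pos hs0 3, pow_pos hs0 4, pow_pos hs0 5, pow_pos hs0 6, pow_pos hs0 2]
  have hexp : exp (2 * s) = exp s ^ 2 := by rw [← exp_nat_mul]; push_cast; ring_nf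
  rw [hexp, show 2 * s / 2 = s by ring]
  nlinarith [mul_nonneg (sub_nonneg.2 hy) (sub_nonneg.2 hslope)]

lemma exists_chernoff_thresholds {ε δ : ℝ} (hε0 : 0 < ε) (hε3 : ε ≤ 3) (hδ0 : 0 < δ)
    (hδ1 : δ < 1) :
    ∃ u l : ℝ,
      exp (32 * log (2 / δ) / ε ^ 2 * (exp (ε / 2) - 1) - ε / 2 * u) = δ / 2 ∧
      exp (32 * log (2 / δ) / ε ^ 2 * (exp (-(ε / 2)) - 1) + ε / 2 * l) = δ / 2 ∧
      u + 1 ≤ exp ε * l := by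
  set L := log (2 / δ)
  set μ := 32 * L / ε ^ 2 with hμ
  set y := exp (ε / 2)
  have hL : 2 / 3 < L := by
    have h2 : log 2 ≤ L := log_le_log two_pos ((le_div_iff₀ hδ0).2 (by linarith))
    linarith [log_two_gt_d9]
  have hy0 : 0 < y := exp_pos _
  have hexpL : exp (-L) = δ / 2 := by rw [exp_neg, exp_log (by positivity), inv_div]
  -- each threshold makes its Chernoff exponent equal to `-L`
  refine ⟨(μ * (y - 1) + L) / (ε / 2), (μ * (1 - y⁻¹) - L) / (ε / 2), ?_, ?_, ?_⟩
  · rw [← hexpL]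
    congr 1
    field_simp
    ring
  · rw [← hexpL, exp_neg]
    congr 1
    field_simp
    ring
  · have hyy : exp ε = y ^ 2 := by rw [← exp_nat_mul]; push_cast; ring_nf
    have key := mul_le_mul_of_nonneg_left
      (sq_mul_one_add_exp_add_le_sq_exp_half_sub_one ε hε0 hε3) (by linarith : 0 ≤ L)
    rw [hyy, hμ, div_add_one (by positivity), mul_div_assoc',
      div_le_div_iff_of_pos_right (by positivity)]
    rw [hyy] at key
    field_simp
    nlinarith [mul_le_mul_of_nonneg_right hL.le (pow_pos hε0 3).le]

section

variable {α : Type*} [Fintype α] [DecidableEq α] [Nonempty α] {ρ : ℝ} (hr : ENNReal.ofReal ρ ≤ 1)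

lemma blanketNoise_toOuterMeasure_le_exp (hρ : 0 ≤ ρ) {τ c : ℝ} (hτ : 0 ≤ τ) (z : α) (n : ℕ)
    {S : Set (Multiset α)} (hS : ∀ N ∈ S, exp c ≤ τ ^ N.count z) :
    (blanketNoise α (ENNReal.ofReal ρ) hr n).toOuterMeasure S ≤
      ENNReal.ofReal (exp (n * (ρ / Fintype.card α) * (τ - 1) - c)) := by
  rw [exp_sub, ENNReal.ofReal_div_of_pos (exp_pos c), ENNReal.le_div_iff_mul_le
    (Or.inl (ENNReal.ofReal_pos.2 (exp_pos c)).ne') (Or.inl ENNReal.ofReal_ne_top), mul_comm]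
  refine le_trans ?_ (tsum_blanketNoise_mul_pow_count_le hρ hr hτ z n)
  refine PMF.mul_toOuterMeasure_le_tsum_mul _ fun N hN => ?_
  rw [← ENNReal.ofReal_pow hτ]
  exact ENNReal.ofReal_le_ofReal (hS N hN)

lemma blanketNoise_toOuterMeasure_count_lt_le (hρ : 0 ≤ ρ) {ε δ : ℝ} (hε0 : 0 < ε) (hε3 : ε ≤ 3)
    (hδ0 : 0 < δ) (hδ1 : δ < 1) {n : ℕ}
    (hμ : n * (ρ / Fintype.card α) = 32 * log (2 / δ) / ε ^ 2) (a b : α) :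
    (blanketNoise α (ENNReal.ofReal ρ) hr n).toOuterMeasure
        {N | exp ε * N.count b < N.count a + 1} ≤ ENNReal.ofReal δ := by
  obtain ⟨u, l, hu, hl, hul⟩ := exists_chernoff_thresholds hε0 hε3 hδ0 hδ1
  set P := (blanketNoise α (ENNReal.ofReal ρ) hr n).toOuterMeasure
  calc P {N | exp ε * N.count b < N.count a + 1}
      ≤ P {N | u ≤ N.count a} + P {N | (N.count b : ℝ) ≤ l} := by
        refine (measure_mono fun N hN => ?_).trans (measure_union_le _ _)
        by_contra h
        simp only [Set.mem_union, Set.mem_ofPred_eq, not_or, not_le] at h hN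
        nlinarith [mul_lt_mul_of_pos_left h.2 (exp_pos ε)]
    _ ≤ ENNReal.ofReal (δ / 2) + ENNReal.ofReal (δ / 2) := by
        gcongr
        · refine (blanketNoise_toOuterMeasure_le_exp hr hρ (exp_pos (ε / 2)).le a n
            (c := ε / 2 * u) (S := {N | u ≤ N.count a}) fun N hN => ?_).trans_eq (by rw [hμ, hu])
          rw [Set.mem_ofPred_eq] at hN
          rw [← exp_nat_mul]
          exact exp_le_exp.2 (by nlinarith)
        · refine (blanketNoise_toOuterMeasure_le_exp hr hρ (exp_pos (-(ε / 2))).le b n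
            (c := -(ε / 2 * l)) (S := {N | (N.count b : ℝ) ≤ l}) fun N hN => ?_).trans_eq
            (by rw [hμ, sub_neg_eq_add, hl])
          rw [Set.mem_ofPred_eq] at hN
          rw [← exp_nat_mul]
          exact exp_le_exp.2 (by nlinarith)
    _ = ENNReal.ofReal δ := by
        rw [← ENNReal.ofReal_add (by positivity) (by positivity), add_halves]

lemma blanketNoise_map_cons_toOuterMeasure_le (hρ : 0 ≤ ρ) {ε δ : ℝ} (hε0 : 0 < ε) (hε3 : ε ≤ 3)
    (hδ0 : 0 < δ) (hδ1 : δ < 1) {n : ℕ}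
    (hμ : n * (ρ / Fintype.card α) = 32 * log (2 / δ) / ε ^ 2) (a b : α) (Y : Set (Multiset α)) :
    ((blanketNoise α (ENNReal.ofReal ρ) hr n).map (a ::ₘ ·)).toOuterMeasure Y ≤
      ENNReal.ofReal (exp ε) *
        ((blanketNoise α (ENNReal.ofReal ρ) hr n).map (b ::ₘ ·)).toOuterMeasure Y +
          ENNReal.ofReal δ := by
  refine (PMF.toOuterMeasure_le_mul_add_of_le_on _ _
    (G := {M | (M.count a : ℝ) ≤ exp ε * M.count b}) (fun M hM => blanketNoise_map_cons_le hr ?_)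
    Y).trans (add_le_add_right ?_ _)
  · rw [← ENNReal.ofReal_natCast, ← ENNReal.ofReal_natCast, ← ENNReal.ofReal_mul (exp_pos ε).le]
    exact ENNReal.ofReal_le_ofReal hM
  · rw [PMF.toOuterMeasure_map_apply]
    refine (measure_mono fun N hN => ?_).trans
      (blanketNoise_toOuterMeasure_count_lt_le hr hρ hε0 hε3 hδ0 hδ1 hμ a b)
    simp only [Set.mem_preimage, Set.mem_compl_iff, Set.mem_ofPred_eq, not_le,
      Multiset.count_cons_self, Nat.cast_add, Nat.cast_one] at hN ⊢
    calc exp ε * N.count b ≤ exp ε * (a ::ₘ N).count b :=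
          mul_le_mul_of_nonneg_left (by exact_mod_cast Multiset.count_le_count_cons b a N)
            (exp_pos ε).le
      _ < N.count a + 1 := hN

end

lemma MFE0_eq_map_map_cons {B n : ℕ} [Nonempty (Fin B)] (hB : 0 < B) {r : ℝ≥0∞} (hr : r ≤ 1)
    (D : Fin n → Fin B) (i₀ : Fin n) :
    MFE0 B n hB r hr D = ((blanketNoise (Fin B) r hr n).map (D i₀ ::ₘ ·)).map
      (Multiset.map D (Finset.univ.erase i₀).val + ·) := by
  rw [MFE0, PMF.map_comp]
  congr 1
  funext N
  rw [Function.comp_apply, Multiset.add_cons, ← Multiset.cons_add, ← Multiset.map_cons,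
    Finset.erase_val, Multiset.cons_erase (Finset.mem_univ_val i₀)]

theorem stmt9_general (n B : ℕ) (hB : 0 < B)
    (ε δ : ℝ) (hε0 : 0 < ε) (hε3 : ε ≤ 3) (hδ0 : 0 < δ) (hδ1 : δ < 1)
    (ρ : ℝ) (hρ : ρ = 32 * Real.log (2 / δ) / ε ^ 2 * ((B : ℝ) / n)) (hρ1 : ρ ≤ 1)
    (D D' : Fin n → Fin B) (i₀ : Fin n)
    (hsame : ∀ i, i ≠ i₀ → D i = D' i)
    (Y : Set (Multiset (Fin B))) :
    ((MFE0 B n hB (ENNReal.ofReal ρ) (ENNReal.ofReal_le_one.mpr hρ1) D).toOuterMeasure Y).toReal ≤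
      Real.exp ε *
        ((MFE0 B n hB (ENNReal.ofReal ρ) (ENNReal.ofReal_le_one.mpr hρ1) D').toOuterMeasure
          Y).toReal + δ := by
  have : Nonempty (Fin B) := Fin.pos_iff_nonempty.mp hB
  have hL : 0 ≤ Real.log (2 / δ) := Real.log_nonneg ((le_div_iff₀ hδ0).2 (by linarith))
  have hρ0 : 0 ≤ ρ := by rw [hρ]; positivity
  have hμ : n * (ρ / Fintype.card (Fin B)) = 32 * Real.log (2 / δ) / ε ^ 2 := by
    rw [Fintype.card_fin, hρ]
    field_simp [(Nat.cast_pos.2 i₀.pos).ne', (Nat.cast_pos.2 hB).ne']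
  have hC : (Finset.univ.erase i₀).val.map D' = (Finset.univ.erase i₀).val.map D :=
    Multiset.map_congr rfl fun i hi => (hsame i (Finset.ne_of_mem_erase (s := Finset.univ) hi)).symm
  rw [MFE0_eq_map_map_cons hB _ D i₀, MFE0_eq_map_map_cons hB _ D' i₀, hC,
    PMF.toOuterMeasure_map_apply (_ + ·), PMF.toOuterMeasure_map_apply (_ + ·)]
  exact ENNReal.toReal_le_mul_add_of_le (Real.exp_pos ε).le hδ0.le (PMF.toOuterMeasure_ne_top _ _)
    (blanketNoise_map_cons_toOuterMeasure_le _ hρ0 hε0 hε3 hδ0 hδ1 hμ _ _ _)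

theorem stmt9 (n B : ℕ) (hn : 0 < n) (hB : 0 < B)
    (ε δ : ℝ) (hε0 : 0 < ε) (hε3 : ε ≤ 3) (hδ0 : 0 < δ) (hδ1 : δ < 1)
    (ρ : ℝ) (hρ : ρ = 32 * Real.log (2 / δ) / ε ^ 2 * ((B : ℝ) / n)) (hρ1 : ρ ≤ 1)
    (D D' : Fin n → Fin B) (i₀ : Fin n)
    (hdiff : D i₀ ≠ D' i₀) (hsame : ∀ i, i ≠ i₀ → D i = D' i)
    (Y : Set (Multiset (Fin B))) :
    ((MFE0 B n hB (ENNReal.ofReal ρ) (ENNReal.ofReal_le_one.mpr hρ1) D).toOuterMeasure Y).toReal ≤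
      Real.exp ε *
        ((MFE0 B n hB (ENNReal.ofReal ρ) (ENNReal.ofReal_le_one.mpr hρ1) D').toOuterMeasure
          Y).toReal + δ :=
  stmt9_general n B hB ε δ hε0 hε3 hδ0 hδ1 ρ hρ hρ1 D D' i₀ hsame Y
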